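/- Let X, U, Y be Hilbert spaces, J a canonical symmetry on X, J₁ = J ⊕ I_U, J₂ = J ⊕ I_Y, and let G₁,…,G_N ∈ L(X ⊕ U, X ⊕ Y) satisfy Σ_k G_k* J₂ G_k = J₁ and G_k* J₂ G_l = 0 for k ≠ l. Then for every z, λ in ℂᴺ where both resolvents exist, the transfer function θ(z) := zD + zC(I − zA)⁻¹ zB, together with Φ(z) := ((I − zA)⁻¹ zB ; I_U) : U → X ⊕ U, satisfies the kernel identity I_U − θ(λ)* θ(z) = Φ(λ)* (J₁ − (λG)* J₂ (zG)) Φ(z) in the weak sense, i.e. for all u₁, u₂ ∈ U, ⟨J₁ Φ(z)u₁, Φ(λ)u₂⟩ − ⟨J₂ (zG)Φ(z)u₁, (λG)Φ(λ)u₂⟩ = ⟨u₁, u₂⟩ − ⟨θ(z)u₁, θ(λ)u₂⟩. -/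

import Mathlib

open ContinuousLinearMap
open scoped ComplexInnerProductSpace

noncomputable def diagOp {E F : Type*} [NormedAddCommGroup E] [InnerProductSpace ℂ E]
    [NormedAddCommGroup F] [InnerProductSpace ℂ F]
    (f : E →L[ℂ] E) (g : F →L[ℂ] F) : WithLp 2 (E × F) →L[ℂ] WithLp 2 (E × F) :=
  ((WithLp.prodContinuousLinearEquiv 2 ℂ E F).symm.toContinuousLinearMap).comp
    ((f.prodMap g).comp (WithLp.prodContinuousLinearEquiv 2 ℂ E F).toContinuousLinearMap)

/-- The block operator (A B; C D) : X ⊕ U → X ⊕ Y. -/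
noncomputable def blockOp {X U Y : Type*} [NormedAddCommGroup X] [InnerProductSpace ℂ X]
    [NormedAddCommGroup U] [InnerProductSpace ℂ U]
    [NormedAddCommGroup Y] [InnerProductSpace ℂ Y]
    (A : X →L[ℂ] X) (B : U →L[ℂ] X) (C : X →L[ℂ] Y) (D : U →L[ℂ] Y) :
    WithLp 2 (X × U) →L[ℂ] WithLp 2 (X × Y) :=
  ((WithLp.prodContinuousLinearEquiv 2 ℂ X Y).symm.toContinuousLinearMap).comp
    (((A.coprod B).prod (C.coprod D)).comp
      (WithLp.prodContinuousLinearEquiv 2 ℂ X U).toContinuousLinearMap)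

/-- Weak form of the kernel identity
I − θ(λ)*θ(z) : ⟨J₁Φ(z)u₁, Φ(λ)u₂⟩ − ⟨J₂(zG)Φ(z)u₁, (λG)Φ(λ)u₂⟩ = ⟨u₁,u₂⟩ − ⟨θ(z)u₁, θ(λ)u₂⟩. -/
theorem stmt_19 {X Uu Y : Type*} [NormedAddCommGroup X] [InnerProductSpace ℂ X] [CompleteSpace X]
    [NormedAddCommGroup Uu] [InnerProductSpace ℂ Uu] [CompleteSpace Uu]
    [NormedAddCommGroup Y] [InnerProductSpace ℂ Y] [CompleteSpace Y]
    (N : ℕ) (J : X →L[ℂ] X) (hJsa : IsSelfAdjoint J) (hJinv : J ∘L J = 1)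
    (A : Fin N → X →L[ℂ] X) (B : Fin N → Uu →L[ℂ] X)
    (C : Fin N → X →L[ℂ] Y) (Dk : Fin N → Uu →L[ℂ] Y)
    (hsum : (∑ k, adjoint (blockOp (A k) (B k) (C k) (Dk k)) ∘L
        ((diagOp J (1 : Y →L[ℂ] Y)) ∘L blockOp (A k) (B k) (C k) (Dk k))) =
      diagOp J (1 : Uu →L[ℂ] Uu))
    (hcross : ∀ k l, k ≠ l → adjoint (blockOp (A k) (B k) (C k) (Dk k)) ∘L
        ((diagOp J (1 : Y →L[ℂ] Y)) ∘L blockOp (A l) (B l) (C l) (Dk l)) = 0) :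
    ∀ z lam : Fin N → ℂ,
      IsUnit ((1 : X →L[ℂ] X) - ∑ k, z k • A k) →
      IsUnit ((1 : X →L[ℂ] X) - ∑ k, lam k • A k) →
      let Φ : (Fin N → ℂ) → Uu →L[ℂ] WithLp 2 (X × Uu) := fun w =>
        ((WithLp.prodContinuousLinearEquiv 2 ℂ X Uu).symm.toContinuousLinearMap).comp
          (((Ring.inverse ((1 : X →L[ℂ] X) - ∑ k, w k • A k)).comp
              (∑ k, w k • B k)).prod (ContinuousLinearMap.id ℂ Uu))
      let θ : (Fin N → ℂ) → Uu →L[ℂ] Y := fun w =>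
        (∑ k, w k • Dk k) +
          ((∑ k, w k • C k) ∘L
            ((Ring.inverse ((1 : X →L[ℂ] X) - ∑ k, w k • A k)) ∘L (∑ k, w k • B k)))
      ∀ u₁ u₂ : Uu,
        ⟪(diagOp J (1 : Uu →L[ℂ] Uu)) (Φ z u₁), Φ lam u₂⟫ -
            ⟪(diagOp J (1 : Y →L[ℂ] Y))
                ((∑ k, z k • blockOp (A k) (B k) (C k) (Dk k)) (Φ z u₁)),
              (∑ k, lam k • blockOp (A k) (B k) (C k) (Dk k)) (Φ lam u₂)⟫
          = ⟪u₁, u₂⟫ - ⟪θ z u₁, θ lam u₂⟫ := by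
  intro z lam hz hlam Φ θ u₁ u₂
  have hΦ : ∀ (w : Fin N → ℂ) (u : Uu),
      Φ w u = (WithLp.prodContinuousLinearEquiv 2 ℂ X Uu).symm
        ((Ring.inverse ((1 : X →L[ℂ] X) - ∑ k, w k • A k)) ((∑ k, w k • B k) u), u) := by
    intro w u
    rfl
  have main : ∀ (w : Fin N → ℂ), IsUnit ((1 : X →L[ℂ] X) - ∑ k, w k • A k) → ∀ u : Uu,
      (∑ k, w k • blockOp (A k) (B k) (C k) (Dk k)) (Φ w u) =
      (WithLp.prodContinuousLinearEquiv 2 ℂ X Y).symm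
        ((Ring.inverse ((1 : X →L[ℂ] X) - ∑ k, w k • A k)) ((∑ k, w k • B k) u),
         θ w u) := by
    intro w hw u
    have h2 : (((1 : X →L[ℂ] X) - ∑ k, w k • A k) *
        Ring.inverse ((1 : X →L[ℂ] X) - ∑ k, w k • A k)) ((∑ k, w k • B k) u) =
        (1 : X →L[ℂ] X) ((∑ k, w k • B k) u) := by
      rw [Ring.mul_inverse_cancel _ hw]
    set x := (Ring.inverse ((1 : X →L[ℂ] X) - ∑ k, w k • A k)) ((∑ k, w k • B k) u)
      with hxdef
    rw [ContinuousLinearMap.mul_apply, ContinuousLinearMap.one_apply, ← hxdef,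
      ContinuousLinearMap.sub_apply, ContinuousLinearMap.one_apply] at h2
    have hfix : (∑ k, w k • A k) x + (∑ k, w k • B k) u = x := by
      rw [← h2]; abel
    refine (WithLp.prodContinuousLinearEquiv 2 ℂ X Y).injective ?_
    rw [ContinuousLinearEquiv.apply_symm_apply, hΦ]
    have step1 : (WithLp.prodContinuousLinearEquiv 2 ℂ X Y)
        ((∑ k, w k • blockOp (A k) (B k) (C k) (Dk k))
          ((WithLp.prodContinuousLinearEquiv 2 ℂ X Uu).symm
            (x, u))) =
        ∑ k, w k • (A k x + B k u, C k x + Dk k u) := by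
      rw [ContinuousLinearMap.sum_apply, map_sum]
      refine Finset.sum_congr rfl fun k _ => ?_
      rw [ContinuousLinearMap.smul_apply, map_smul]
      congr 1
    rw [step1]
    have step2 : (∑ k, w k • (A k x + B k u, C k x + Dk k u) : X × Y) =
        ((∑ k, w k • A k) x + (∑ k, w k • B k) u,
         (∑ k, w k • C k) x + (∑ k, w k • Dk k) u) := by
      refine Prod.ext ?_ ?_ <;>
        simp [Prod.fst_sum, Prod.snd_sum, Finset.sum_add_distrib,
          ContinuousLinearMap.sum_apply, smul_add]
    rw [step2, hfix]
    refine Prod.ext rfl ?_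
    show (∑ k, w k • C k) x + (∑ k, w k • Dk k) u = θ w u
    simp only [θ]
    rw [ContinuousLinearMap.add_apply, ContinuousLinearMap.comp_apply,
      ContinuousLinearMap.comp_apply, ← hxdef, add_comm]
  rw [main z hz u₁, main lam hlam u₂, hΦ z u₁, hΦ lam u₂]
  simp only [diagOp, ContinuousLinearMap.comp_apply,
    ContinuousLinearEquiv.coe_coe, ContinuousLinearEquiv.apply_symm_apply]
  rw [WithLp.prod_inner_apply, WithLp.prod_inner_apply]
  simp only [WithLp.prodContinuousLinearEquiv_symm_apply, WithLp.toLp_fst,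
    WithLp.toLp_snd, ContinuousLinearMap.coe_prodMap', Prod.map_fst,
    Prod.map_snd, Prod.map_apply', ContinuousLinearMap.one_apply]
  ring
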